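/- arXiv:1103.1850 — 2 statements merged into one kernel-verified Lean document; each statement's English description precedes it below -/
import Mathlib

section
/- Let T be a Lorenz-like cusp map satisfying conditions (i)–(iii) of the expansion lemma. Then the tail of the Lebesgue measure of the return-time function on the induced set I decays exponentially: Σ_{k>n} m{x ∈ I : τ_I(x) ≥ k} = O((α')^{−n/B*}) as n → ∞. -/
open Set Filter MeasureTheory Topology Asymptotics

noncomputable section

/-- A Lorenz-like cusp map of the unit interval, as in Gianfelice–Maimone–Pelino–Vaienti:
cusp point `x₀ ∈ (0,1)`, increasing convex left branch onto `[0,1]`, decreasing convex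
right branch onto `[0,1]`, `C¹` away from the cusp, `C^{1+ι}` derivative on each side,
with the prescribed local behaviours at `0`, `1` and at the cusp. -/
structure LorenzMap where
  T : ℝ → ℝ
  DT : ℝ → ℝ
  x₀ : ℝ
  ι : ℝ
  α' : ℝ
  α : ℝ
  ψ : ℝ
  κ : ℝ
  A : ℝ
  A' : ℝ
  B : ℝ
  B' : ℝ
  β' : ℝ
  βt : ℝ
  hx₀ : x₀ ∈ Ioo (0:ℝ) 1
  hι : ι ∈ Ioo (0:ℝ) 1
  hα' : 1 < α'
  hα : α ∈ Ioo (0:ℝ) 1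
  hψ : 1 < ψ
  hκ : 1 < κ
  hA : 0 < A
  hA' : 0 < A'
  hB : B ∈ Ioo (0:ℝ) 1
  hB' : B' ∈ Ioo (0:ℝ) 1
  hβ' : 0 < β'
  hβt : 0 < βt
  measurable_T : Measurable T
  mapsTo : MapsTo T (Icc 0 1) (Icc 0 1)
  left_mono : StrictMonoOn T (Icc 0 x₀)
  right_anti : StrictAntiOn T (Icc x₀ 1)
  left_convex : ConvexOn ℝ (Icc 0 x₀) T
  right_convex : ConvexOn ℝ (Icc x₀ 1) T
  left_onto : SurjOn T (Icc 0 x₀) (Icc 0 1)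
  right_onto : SurjOn T (Icc x₀ 1) (Icc 0 1)
  hasDeriv : ∀ x ∈ Icc (0:ℝ) 1, x ≠ x₀ → HasDerivAt T (DT x) x
  holder : ∃ Ch > (0:ℝ),
    (∀ x ∈ Ioo 0 x₀, ∀ y ∈ Ioo 0 x₀, |DT x - DT y| ≤ Ch * |x - y| ^ ι) ∧
    (∀ x ∈ Ioo x₀ 1, ∀ y ∈ Ioo x₀ 1, |DT x - DT y| ≤ Ch * |x - y| ^ ι)
  T_asym0 : (fun x : ℝ => T x - (α' * x + β' * x ^ (1+ψ))) =o[𝓝[>] 0] fun x : ℝ => x ^ (1+ψ)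
  DT_asym0 : ∃ c > (0:ℝ), (fun x : ℝ => DT x - (α' + c * x ^ ψ)) =o[𝓝[>] 0] fun x : ℝ => x ^ ψ
  T_asym1 : (fun x : ℝ => T x - (α * (1-x) + βt * (1-x) ^ (1+κ))) =o[𝓝[<] 1]
    fun x : ℝ => (1-x) ^ (1+κ)
  DT_asym1 : ∃ c > (0:ℝ), (fun x : ℝ => DT x - (-α - c * (1-x) ^ κ)) =o[𝓝[<] 1]
    fun x : ℝ => (1-x) ^ κ
  T_asymL : (fun x : ℝ => T x - (1 - A' * (x₀ - x) ^ B')) =o[𝓝[<] x₀]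
    fun x : ℝ => (x₀ - x) ^ B'
  DT_asymL : ∃ c > (0:ℝ), (fun x : ℝ => DT x - c * (x₀ - x) ^ (B'-1)) =o[𝓝[<] x₀]
    fun x : ℝ => (x₀ - x) ^ (B'-1)
  T_asymR : (fun x : ℝ => T x - (1 - A * (x - x₀) ^ B)) =o[𝓝[>] x₀]
    fun x : ℝ => (x - x₀) ^ B
  DT_asymR : ∃ c > (0:ℝ), (fun x : ℝ => DT x - (-(c * (x - x₀) ^ (B-1)))) =o[𝓝[>] x₀]
    fun x : ℝ => (x - x₀) ^ (B-1)

/-- `B* = max (B, B')`. -/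
def LorenzMap.Bs (L : LorenzMap) : ℝ := max L.B L.B'

/-- The preimages of the cusp point: `a 0 = a₀ = T₂⁻¹ x₀`, `a' 0 = a₀' = T₁⁻¹ x₀`,
`a' p = T₁⁻ᵖ a₀'`, `a p = T₂⁻¹ T₁^{-(p-1)} a₀'` and the points `b p ∈ (x₀, a₀)`,
`b' p ∈ (a₀', x₀)` (for `p ≥ 1`) with `T (b p) = T (b' p) = a (p-1)`. -/
structure PreimageData (L : LorenzMap) where
  a : ℕ → ℝ
  a' : ℕ → ℝ
  b : ℕ → ℝ
  b' : ℕ → ℝ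
  ha0 : a 0 ∈ Ioo L.x₀ 1 ∧ L.T (a 0) = L.x₀
  ha'0 : a' 0 ∈ Ioo 0 L.x₀ ∧ L.T (a' 0) = L.x₀
  ha' : ∀ p : ℕ, a' (p+1) ∈ Ioo (0:ℝ) L.x₀ ∧ L.T (a' (p+1)) = a' p
  ha : ∀ p : ℕ, a (p+1) ∈ Ioo L.x₀ 1 ∧ L.T (a (p+1)) = a' p
  hb : ∀ p : ℕ, b (p+1) ∈ Ioo L.x₀ (a 0) ∧ L.T (b (p+1)) = a p
  hb' : ∀ p : ℕ, b' (p+1) ∈ Ioo (a' 0) L.x₀ ∧ L.T (b' (p+1)) = a p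

/-- `d_{(1,0)} := inf_{x ∈ (b₁, a₀)} |DT x|`. -/
def dOneZero (L : LorenzMap) (P : PreimageData L) : ℝ :=
  sInf ((fun x => |L.DT x|) '' Ioo (P.b 1) (P.a 0))

/-- `p* := ⌊1 + log (α'' α⁻¹) / log α'⌋`. -/
def pstar (L : LorenzMap) (α'' : ℝ) : ℤ :=
  ⌊1 + Real.log (α'' / L.α) / Real.log L.α'⌋

/-- Conditions (i)–(iii) of the expansion lemma, for a constant
`α''` with `1 < α'' ≤ min (d_{(1,0)}, α')`. -/
def ExpCond (L : LorenzMap) (P : PreimageData L) (α'' : ℝ) : Prop :=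
  1 < α'' ∧ α'' ≤ min (dOneZero L P) L.α' ∧
  1 < dOneZero L P ∧
  L.DT (P.a' 0) ≤ |L.DT (P.b 1)| ∧
  ∀ p : ℕ, 1 ≤ p → (p : ℤ) ≤ pstar L α'' →
    α'' < |L.DT (P.a (p-1))| * ∏ k ∈ Finset.range (p-1), L.DT (P.a' k)

/-- The induction set `I = (a₀', a₀) \ {x₀}`. -/
def indSet (L : LorenzMap) (P : PreimageData L) : Set ℝ :=
  Ioo (P.a' 0) (P.a 0) \ {L.x₀}

/-- The cylinders of first return time `p`:
`Z₁ = (a₀',b₁') ∪ (b₁,a₀)` and `Z_p = (b'_{p-1},b'_p) ∪ (b_p,b_{p-1})` for `p > 1`. -/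
def Zcyl (L : LorenzMap) (P : PreimageData L) : ℕ → Set ℝ
  | 0 => ∅
  | 1 => Ioo (P.a' 0) (P.b' 1) ∪ Ioo (P.b 1) (P.a 0)
  | p + 2 => Ioo (P.b' (p+1)) (P.b' (p+2)) ∪ Ioo (P.b (p+2)) (P.b (p+1))

/-- First return time of `x` to the set `I` under `T` (`0` if the point never returns). -/
def firstReturn (T : ℝ → ℝ) (I : Set ℝ) (x : ℝ) : ℕ :=
  sInf {n : ℕ | 1 ≤ n ∧ T^[n] x ∈ I}

/-- The first return map to `I`. -/
def returnMap (T : ℝ → ℝ) (I : Set ℝ) (x : ℝ) : ℝ :=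
  T^[firstReturn T I x] x

/-- `μ` is an absolutely continuous (w.r.t. Lebesgue) `T`-invariant Borel probability
measure concentrated on `[0,1]`. -/
def acim (T : ℝ → ℝ) (μ : Measure ℝ) : Prop :=
  IsProbabilityMeasure μ ∧ μ ≪ volume ∧ μ (Icc 0 1) = 1 ∧ Measure.map T μ = μ

/-- A Hölder continuous observable on `[0,1]`. -/
def HolderObs (f : ℝ → ℝ) : Prop :=
  ∃ C γ : NNReal, 0 < γ ∧ HolderOnWith C γ f (Icc (0:ℝ) 1)

/-- `μI` is the invariant probability measure of the first return map on `I`, absolutely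
continuous with density bounded away from `0` and `∞`. -/
def inducedInv (L : LorenzMap) (P : PreimageData L) (μI : Measure ℝ) : Prop :=
  IsProbabilityMeasure μI ∧ μI (indSet L P) = 1 ∧
  Measure.map (returnMap L.T (indSet L P)) μI = μI ∧
  ∃ ρI : ℝ → ℝ, ∃ c C : ℝ, 0 < c ∧
    μI = (volume.restrict (indSet L P)).withDensity (fun x => ENNReal.ofReal (ρI x)) ∧
    ∀ x ∈ indSet L P, c ≤ ρI x ∧ ρI x ≤ C

/-! A point `x ∈ I` that has not returned to `I` by time `N` is exponentially close to
the cusp. Its image lies in `[a₀, 1)` and the next one in `(0, a₀']`; from then on the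
orbit stays in `(0, a₀']`, where convexity gives `T y ≥ α' y`, while near `1` convexity
gives `T y ≥ α (1 - y)`. Hence `α α'^(N-3) (1 - T x) ≤ a₀'`, and since
`1 - T x ≳ |x - x₀|^B*` this forces `|x - x₀| ≲ α'^(-N/B*)`, except on the finitely many
points whose orbit hits the cusp. Summing the resulting geometric series gives the tail
bound. -/

theorem ConvexOn.mul_sub_le_of_eventually_nhdsGT {f : ℝ → ℝ} {a b m : ℝ}
    (hf : ConvexOn ℝ (Icc a b) f) (hfa : f a = 0)
    (hev : ∀ᶠ t in 𝓝[>] a, m * (t - a) ≤ f t) {t : ℝ} (ht : t ∈ Ioc a b) :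
    m * (t - a) ≤ f t := by
  obtain ⟨s, hs, hst⟩ := (hev.and (Ioo_mem_nhdsGT ht.1)).exists
  have hslope : (f s - f a) / (s - a) ≤ (f t - f a) / (t - a) :=
    hf.secant_mono ⟨le_rfl, ht.1.le.trans ht.2⟩ ⟨hst.1.le, hst.2.le.trans ht.2⟩
      ⟨ht.1.le, ht.2⟩ hst.1.ne' ht.1.ne' hst.2.le
  rw [hfa, sub_zero, sub_zero] at hslope
  calc m * (t - a) ≤ f s / (s - a) * (t - a) := by
        gcongr
        · linarith [ht.1]
        · rwa [le_div_iff₀ (sub_pos.2 hst.1)]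
    _ ≤ f t := by rwa [← le_div_iff₀ (sub_pos.2 ht.1)]

theorem ConvexOn.mul_sub_le_of_eventually_nhdsLT {f : ℝ → ℝ} {a b m : ℝ}
    (hf : ConvexOn ℝ (Icc a b) f) (hfb : f b = 0)
    (hev : ∀ᶠ t in 𝓝[<] b, m * (b - t) ≤ f t) {t : ℝ} (ht : t ∈ Ico a b) :
    m * (b - t) ≤ f t := by
  obtain ⟨s, hs, hst⟩ := (hev.and (Ioo_mem_nhdsLT ht.2)).exists
  have hslope : (f t - f b) / (t - b) ≤ (f s - f b) / (s - b) :=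
    hf.secant_mono ⟨ht.1.trans ht.2.le, le_rfl⟩ ⟨ht.1, ht.2.le⟩
      ⟨ht.1.trans hst.1.le, hst.2.le⟩ ht.2.ne hst.2.ne hst.1.le
  rw [hfb, sub_zero, sub_zero, ← neg_sub b t, ← neg_sub b s, div_neg, div_neg,
    neg_le_neg_iff] at hslope
  calc m * (b - t) ≤ f s / (b - s) * (b - t) := by
        gcongr
        · linarith [ht.2]
        · rwa [le_div_iff₀ (sub_pos.2 hst.2)]
    _ ≤ f t := by rwa [← le_div_iff₀ (sub_pos.2 ht.2)]

theorem Asymptotics.IsLittleO.eventually_le_of_sub_add_mul {α : Type*} {l : Filter α}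
    {f g h : α → ℝ} {c : ℝ} (hfg : (fun x => f x - (g x + c * h x)) =o[l] h) (hc : 0 < c)
    (hh : ∀ᶠ x in l, 0 ≤ h x) : ∀ᶠ x in l, g x ≤ f x := by
  filter_upwards [hfg.bound hc, hh] with x hx hx0
  rw [Real.norm_eq_abs, Real.norm_eq_abs, abs_of_nonneg hx0] at hx
  linarith [(abs_le.1 hx).1]

theorem Asymptotics.IsLittleO.eventually_le_sub_half_mul {α : Type*} {l : Filter α}
    {f g h : α → ℝ} {c : ℝ} (hfg : (fun x => f x - (g x - c * h x)) =o[l] h) (hc : 0 < c)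
    (hh : ∀ᶠ x in l, 0 ≤ h x) : ∀ᶠ x in l, f x ≤ g x - c / 2 * h x := by
  filter_upwards [hfg.bound (half_pos hc), hh] with x hx hx0
  rw [Real.norm_eq_abs, Real.norm_eq_abs, abs_of_nonneg hx0] at hx
  linarith [(abs_le.1 hx).2]

theorem exists_mul_rpow_sub_le_of_monotoneOn {g : ℝ → ℝ} {a r B B' c : ℝ} (har : a < r)
    (hr : r ≤ a + 1) (hB : 0 ≤ B) (hBB' : B ≤ B') (hc : 0 < c) (hg : MonotoneOn g (Ioc a r))
    (hev : ∀ᶠ x in 𝓝[>] a, c * (x - a) ^ B ≤ g x) :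
    ∃ c' > 0, ∀ x ∈ Ioc a r, c' * (x - a) ^ B' ≤ g x := by
  obtain ⟨δ, hδ, hδsub⟩ := mem_nhdsGT_iff_exists_Ioo_subset.1 hev
  set u := min ((a + δ) / 2) r
  have hau : a < u := lt_min (by linarith [mem_Ioi.1 hδ]) har
  have hu_good : ∀ x ∈ Ioc a u, c * (x - a) ^ B ≤ g x := fun x hx =>
    hδsub ⟨hx.1, hx.2.trans_lt ((min_le_left _ _).trans_lt (by linarith [mem_Ioi.1 hδ]))⟩
  have hur : u ≤ r := min_le_right _ _
  have hpow_le_one : ∀ x ∈ Ioc a r, ∀ {E : ℝ}, 0 ≤ E → (x - a) ^ E ≤ 1 :=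
    fun x hx _ hE => Real.rpow_le_one (sub_nonneg.2 hx.1.le) (by linarith [hx.2]) hE
  refine ⟨c * (u - a) ^ B, mul_pos hc (Real.rpow_pos_of_pos (sub_pos.2 hau) _),
    fun x hx => ?_⟩
  rcases le_or_gt x u with hxu | hux
  · calc c * (u - a) ^ B * (x - a) ^ B' ≤ c * (x - a) ^ B :=
          mul_le_mul (mul_le_of_le_one_right hc.le (hpow_le_one u ⟨hau, hur⟩ hB))
            (Real.rpow_le_rpow_of_exponent_ge (sub_pos.2 hx.1) (by linarith [hx.2]) hBB')
            (Real.rpow_nonneg (sub_nonneg.2 hx.1.le) _) hc.le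
      _ ≤ g x := hu_good x ⟨hx.1, hxu⟩
  · calc c * (u - a) ^ B * (x - a) ^ B' ≤ c * (u - a) ^ B * 1 := by
          gcongr; exact hpow_le_one x hx (hB.trans hBB')
      _ ≤ g u := by rw [mul_one]; exact hu_good u ⟨hau, le_rfl⟩
      _ ≤ g x := hg ⟨hau, hur⟩ hx hux.le

theorem le_rpow_inv_mul_pow_of_rpow_mul_pow_le {z B a D : ℝ} {n : ℕ} (hz : 0 ≤ z) (hB : 0 < B)
    (ha : 0 < a) (h : z ^ B * a ^ n ≤ D) : z ≤ D ^ B⁻¹ * (a ^ (-B⁻¹)) ^ n := by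
  have han : 0 < a ^ n := pow_pos ha n
  have hzD : z ^ B ≤ D / a ^ n := (le_div_iff₀ han).2 h
  have hD : 0 ≤ D := (mul_nonneg (Real.rpow_nonneg hz B) han.le).trans h
  calc z = (z ^ B) ^ B⁻¹ := (Real.rpow_rpow_inv hz hB.ne').symm
    _ ≤ (D / a ^ n) ^ B⁻¹ := by gcongr
    _ = D ^ B⁻¹ * (a ^ (-B⁻¹)) ^ n := by
      rw [Real.div_rpow hD han.le, Real.rpow_neg ha.le, inv_pow, ← Real.rpow_natCast,
        ← Real.rpow_mul ha.le, ← Real.rpow_natCast, ← Real.rpow_mul ha.le, mul_comm,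
        div_eq_mul_inv]

theorem ENNReal.tsum_ofReal_mul_pow_add {K r : ℝ} (hK : 0 ≤ K) (hr0 : 0 ≤ r) (hr1 : r < 1)
    (n : ℕ) : ∑' j : ℕ, ENNReal.ofReal (K * r ^ (n + 1 + j)) =
      ENNReal.ofReal (K * r / (1 - r) * r ^ n) := by
  simp_rw [pow_add r (n + 1), ← mul_assoc]
  rw [← ENNReal.ofReal_tsum_of_nonneg (fun j => by positivity)
    ((summable_geometric_of_lt_one hr0 hr1).mul_left (K * r ^ (n + 1))), tsum_mul_left,
    tsum_geometric_of_lt_one hr0 hr1]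
  congr 1
  field_simp
  ring

namespace LorenzMap

variable (L : LorenzMap)

theorem B_le_Bs : L.B ≤ L.Bs := le_max_left _ _

theorem B'_le_Bs : L.B' ≤ L.Bs := le_max_right _ _

theorem Bs_pos : 0 < L.Bs := L.hB.1.trans_le L.B_le_Bs

theorem α'_pos : 0 < L.α' := zero_lt_one.trans L.hα'

def decayRate : ℝ := L.α' ^ (-L.Bs⁻¹)

theorem decayRate_pos : 0 < L.decayRate := Real.rpow_pos_of_pos L.α'_pos _

theorem decayRate_lt_one : L.decayRate < 1 :=
  Real.rpow_lt_one_of_one_lt_of_neg L.hα' (neg_lt_zero.2 (inv_pos.2 L.Bs_pos))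

theorem decayRate_pow (n : ℕ) : L.decayRate ^ n = L.α' ^ (-(n : ℝ) / L.Bs) := by
  rw [decayRate, ← Real.rpow_natCast, ← Real.rpow_mul L.α'_pos.le]
  ring_nf

theorem T_zero : L.T 0 = 0 := by
  obtain ⟨t, ht, hTt⟩ := L.left_onto (left_mem_Icc.2 zero_le_one)
  have hle : L.T 0 ≤ L.T t := L.left_mono.monotoneOn (left_mem_Icc.2 L.hx₀.1.le) ht ht.1
  linarith [(L.mapsTo (left_mem_Icc.2 zero_le_one)).1]

theorem T_x₀ : L.T L.x₀ = 1 := by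
  obtain ⟨t, ht, hTt⟩ := L.left_onto (right_mem_Icc.2 zero_le_one)
  have hle : L.T t ≤ L.T L.x₀ := L.left_mono.monotoneOn ht (right_mem_Icc.2 L.hx₀.1.le) ht.2
  linarith [(L.mapsTo ⟨L.hx₀.1.le, L.hx₀.2.le⟩).2]

theorem T_one : L.T 1 = 0 := by
  obtain ⟨t, ht, hTt⟩ := L.right_onto (left_mem_Icc.2 zero_le_one)
  have hle : L.T 1 ≤ L.T t := L.right_anti.antitoneOn ht (right_mem_Icc.2 L.hx₀.2.le) ht.2
  linarith [(L.mapsTo (right_mem_Icc.2 zero_le_one)).1]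

theorem α'_mul_le_T {t : ℝ} (ht : t ∈ Ioc 0 L.x₀) : L.α' * t ≤ L.T t := by
  have hev : ∀ᶠ t in 𝓝[>] (0:ℝ), L.α' * (t - 0) ≤ L.T t := by
    simpa only [sub_zero] using L.T_asym0.eventually_le_of_sub_add_mul L.hβ'
      (eventually_mem_nhdsWithin.mono fun _ hs => Real.rpow_nonneg (le_of_lt hs) _)
  simpa only [sub_zero] using L.left_convex.mul_sub_le_of_eventually_nhdsGT L.T_zero hev ht

theorem α_mul_one_sub_le_T {t : ℝ} (ht : t ∈ Ico L.x₀ 1) : L.α * (1 - t) ≤ L.T t :=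
  L.right_convex.mul_sub_le_of_eventually_nhdsLT L.T_one
    (L.T_asym1.eventually_le_of_sub_add_mul L.hβt (eventually_mem_nhdsWithin.mono
      fun _ hs => Real.rpow_nonneg (sub_nonneg.2 (le_of_lt hs)) _)) ht

theorem exists_mul_sub_x₀_rpow_le_one_sub_T :
    ∃ c > 0, ∀ x ∈ Ioc L.x₀ 1, c * (x - L.x₀) ^ L.Bs ≤ 1 - L.T x :=
  exists_mul_rpow_sub_le_of_monotoneOn (g := fun x => 1 - L.T x)
    L.hx₀.2 (by linarith [L.hx₀.1]) L.hB.1.le L.B_le_Bs (half_pos L.hA)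
    (fun x hx y hy hxy => sub_le_sub_left (L.right_anti.antitoneOn
      (Ioc_subset_Icc_self hx) (Ioc_subset_Icc_self hy) hxy) 1)
    ((L.T_asymR.eventually_le_sub_half_mul L.hA (eventually_mem_nhdsWithin.mono
      fun _ hx => Real.rpow_nonneg (sub_nonneg.2 (le_of_lt hx)) _)).mono fun _ hx => by linarith)

theorem exists_mul_x₀_sub_rpow_le_one_sub_T :
    ∃ c > 0, ∀ x ∈ Ico 0 L.x₀, c * (L.x₀ - x) ^ L.Bs ≤ 1 - L.T x := by
  have hev : ∀ᶠ y in 𝓝[>] (-L.x₀), L.A' / 2 * (y - -L.x₀) ^ L.B' ≤ 1 - L.T (-y) := by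
    refine (tendsto_neg_nhdsGT_neg.eventually (L.T_asymL.eventually_le_sub_half_mul L.hA'
      (eventually_mem_nhdsWithin.mono fun _ hx => Real.rpow_nonneg
        (sub_nonneg.2 (le_of_lt hx)) _))).mono fun y hy => ?_
    rw [show y - -L.x₀ = L.x₀ - -y by ring]
    linarith
  obtain ⟨c, hc, hle⟩ := exists_mul_rpow_sub_le_of_monotoneOn (g := fun y => 1 - L.T (-y))
    (neg_lt_zero.2 L.hx₀.1) (by linarith [L.hx₀.2]) L.hB'.1.le L.B'_le_Bs (half_pos L.hA')
    (fun x hx y hy hxy => sub_le_sub_left (L.left_mono.monotoneOn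
      ⟨by linarith [hy.2], by linarith [hy.1]⟩ ⟨by linarith [hx.2], by linarith [hx.1]⟩
      (neg_le_neg hxy)) 1) hev
  refine ⟨c, hc, fun x hx => ?_⟩
  have := hle (-x) ⟨by linarith [hx.2], by linarith [hx.1]⟩
  rwa [neg_neg, show -x - -L.x₀ = L.x₀ - x by ring] at this

theorem exists_mul_rpow_le_one_sub_T :
    ∃ c > 0, ∀ x ∈ Icc 0 1, c * |x - L.x₀| ^ L.Bs ≤ 1 - L.T x := by
  obtain ⟨cL, hcL, hL⟩ := L.exists_mul_x₀_sub_rpow_le_one_sub_T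
  obtain ⟨cR, hcR, hR⟩ := L.exists_mul_sub_x₀_rpow_le_one_sub_T
  refine ⟨min cL cR, lt_min hcL hcR, fun x hx => ?_⟩
  rcases lt_trichotomy x L.x₀ with hlt | rfl | hgt
  · rw [abs_of_neg (sub_neg.2 hlt), neg_sub]
    exact (mul_le_mul_of_nonneg_right (min_le_left _ _)
      (Real.rpow_nonneg (sub_pos.2 hlt).le _)).trans (hL x ⟨hx.1, hlt⟩)
  · rw [sub_self, abs_zero, Real.zero_rpow L.Bs_pos.ne', L.T_x₀, mul_zero, sub_self]
  · rw [abs_of_pos (sub_pos.2 hgt)]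
    exact (mul_le_mul_of_nonneg_right (min_le_right _ _)
      (Real.rpow_nonneg (sub_pos.2 hgt).le _)).trans (hR x ⟨hgt, hx.2⟩)

theorem finite_inter_preimage {s : Set ℝ} (hs : s.Finite) :
    (Icc 0 1 ∩ L.T ⁻¹' s).Finite := by
  have hsplit : Icc 0 1 ∩ L.T ⁻¹' s ⊆
      (Icc 0 L.x₀ ∩ L.T ⁻¹' s) ∪ (Icc L.x₀ 1 ∩ L.T ⁻¹' s) := by
    rintro x ⟨hx, hxs⟩
    rcases le_total x L.x₀ with h | h
    exacts [Or.inl ⟨⟨hx.1, h⟩, hxs⟩, Or.inr ⟨⟨h, hx.2⟩, hxs⟩]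
  refine (Finite.union ?_ ?_).subset hsplit
  · exact Finite.of_finite_image (hs.subset (image_subset_iff.2 inter_subset_right))
      (L.left_mono.injOn.mono inter_subset_left)
  · exact Finite.of_finite_image (hs.subset (image_subset_iff.2 inter_subset_right))
      (L.right_anti.injOn.mono inter_subset_left)

theorem finite_inter_preimage_iterate {s : Set ℝ} (hs : s.Finite) (k : ℕ) :
    (Icc 0 1 ∩ L.T^[k] ⁻¹' s).Finite := by
  induction k with
  | zero => exact hs.subset inter_subset_right
  | succ k ih =>
    refine (L.finite_inter_preimage ih).subset fun x ⟨hx, hxs⟩ => ⟨hx, L.mapsTo hx, ?_⟩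
    rwa [mem_preimage, ← Function.iterate_succ_apply]

end LorenzMap

namespace PreimageData

variable {L : LorenzMap} (P : PreimageData L)

theorem indSet_subset_Icc : indSet L P ⊆ Icc 0 1 := fun _ hx =>
  ⟨(P.ha'0.1.1.trans hx.1.1).le, (hx.1.2.trans P.ha0.1.2).le⟩

theorem mem_Ioc_a'_of_notMem_Ioo {z : ℝ} (hz : z ∈ Ioc 0 L.x₀)
    (hzI : z ∉ Ioo (P.a' 0) (P.a 0)) : z ∈ Ioc 0 (P.a' 0) :=
  ⟨hz.1, not_lt.1 fun h => hzI ⟨h, hz.2.trans_lt P.ha0.1.1⟩⟩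

theorem T_mem_Ico_of_mem_indSet {x : ℝ} (hx : x ∈ indSet L P) (hTx : L.T x ∉ indSet L P) :
    L.T x ∈ Ico (P.a 0) 1 := by
  obtain ⟨⟨ha'x, hxa⟩, hxx₀ : x ≠ L.x₀⟩ := hx
  obtain ⟨⟨ha'0, ha'x₀⟩, hTa'⟩ := P.ha'0
  obtain ⟨⟨hx₀a, ha1⟩, hTa⟩ := P.ha0
  have hTxIoo : L.T x ∈ Ioo L.x₀ 1 := by
    rcases hxx₀.lt_or_gt with h | h
    · refine ⟨?_, ?_⟩
      · rw [← hTa']; exact L.left_mono ⟨ha'0.le, ha'x₀.le⟩ ⟨by linarith, h.le⟩ ha'x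
      · rw [← L.T_x₀]; exact L.left_mono ⟨by linarith, h.le⟩ ⟨L.hx₀.1.le, le_rfl⟩ h
    · refine ⟨?_, ?_⟩
      · rw [← hTa]; exact L.right_anti ⟨h.le, by linarith⟩ ⟨hx₀a.le, ha1.le⟩ hxa
      · rw [← L.T_x₀]; exact L.right_anti ⟨le_rfl, L.hx₀.2.le⟩ ⟨h.le, by linarith⟩ h
  exact ⟨not_lt.1 fun h => hTx ⟨⟨by linarith [hTxIoo.1], h⟩, hTxIoo.1.ne'⟩, hTxIoo.2⟩

theorem T_mem_Ioc_of_mem_Ico {y : ℝ} (hy : y ∈ Ico (P.a 0) 1)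
    (hTy : L.T y ∉ Ioo (P.a' 0) (P.a 0)) : L.T y ∈ Ioc 0 (P.a' 0) := by
  obtain ⟨⟨hx₀a, ha1⟩, hTa⟩ := P.ha0
  refine P.mem_Ioc_a'_of_notMem_Ioo ⟨?_, ?_⟩ hTy
  · rw [← L.T_one]
    exact L.right_anti ⟨by linarith [hy.1], hy.2.le⟩ ⟨L.hx₀.2.le, le_rfl⟩ hy.2
  · rw [← hTa]
    exact L.right_anti.antitoneOn ⟨hx₀a.le, ha1.le⟩ ⟨by linarith [hy.1], hy.2.le⟩ hy.1

theorem T_mem_Ioc_of_mem_Ioc {y : ℝ} (hy : y ∈ Ioc 0 (P.a' 0))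
    (hTy : L.T y ∉ Ioo (P.a' 0) (P.a 0)) : L.T y ∈ Ioc 0 (P.a' 0) := by
  obtain ⟨⟨ha'0, ha'x₀⟩, hTa'⟩ := P.ha'0
  refine P.mem_Ioc_a'_of_notMem_Ioo ⟨?_, ?_⟩ hTy
  · rw [← L.T_zero]
    exact L.left_mono ⟨le_rfl, L.hx₀.1.le⟩ ⟨hy.1.le, by linarith [hy.2]⟩ hy.1
  · rw [← hTa']
    exact L.left_mono.monotoneOn ⟨hy.1.le, by linarith [hy.2]⟩ ⟨ha'0.le, ha'x₀.le⟩ hy.2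

theorem pow_mul_le_iterate {y : ℝ} (hy : y ∈ Ioc 0 (P.a' 0)) (m : ℕ)
    (hesc : ∀ j ∈ Icc 1 m, L.T^[j] y ∉ Ioo (P.a' 0) (P.a 0)) :
    L.T^[m] y ∈ Ioc 0 (P.a' 0) ∧ L.α' ^ m * y ≤ L.T^[m] y := by
  induction m with
  | zero => simpa using hy
  | succ m ih =>
    obtain ⟨hmem, hle⟩ := ih fun j hj => hesc j ⟨hj.1, hj.2.trans m.le_succ⟩
    rw [Function.iterate_succ_apply']
    refine ⟨P.T_mem_Ioc_of_mem_Ioc hmem ?_, ?_⟩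
    · rw [← Function.iterate_succ_apply' L.T]; exact hesc (m + 1) ⟨m.succ_pos, le_rfl⟩
    · calc L.α' ^ (m + 1) * y = L.α' * (L.α' ^ m * y) := by ring
        _ ≤ L.α' * L.T^[m] y := by gcongr; exact L.α'_pos.le
        _ ≤ L.T (L.T^[m] y) :=
          L.α'_mul_le_T ⟨hmem.1, hmem.2.trans P.ha'0.1.2.le⟩

theorem α_mul_α'_pow_mul_one_sub_T_le {x : ℝ} (hx : x ∈ indSet L P)
    (hTx : L.T x ∉ indSet L P) (n : ℕ)
    (hesc : ∀ k ∈ Icc 2 (n + 2), L.T^[k] x ∉ Ioo (P.a' 0) (P.a 0)) :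
    L.α * L.α' ^ n * (1 - L.T x) ≤ P.a' 0 := by
  have hTx_mem := P.T_mem_Ico_of_mem_indSet hx hTx
  have hy : L.T (L.T x) ∈ Ioc 0 (P.a' 0) :=
    P.T_mem_Ioc_of_mem_Ico hTx_mem (hesc 2 ⟨le_rfl, by omega⟩)
  obtain ⟨hmem, hle⟩ := P.pow_mul_le_iterate hy n fun j ⟨_, hjn⟩ => by
    have := hesc (j + 2) ⟨by omega, by omega⟩
    rwa [Function.iterate_add_apply] at this
  calc L.α * L.α' ^ n * (1 - L.T x) = L.α' ^ n * (L.α * (1 - L.T x)) := by ring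
    _ ≤ L.α' ^ n * L.T (L.T x) := by
      gcongr
      · exact pow_nonneg L.α'_pos.le n
      · exact L.α_mul_one_sub_le_T ⟨(P.ha0.1.1.trans_le hTx_mem.1).le, hTx_mem.2⟩
    _ ≤ P.a' 0 := hle.trans hmem.2

/-- `{x ∈ I | τ_I x ≥ N}`, points that never return included. -/
def noReturnBefore (N : ℕ) : Set ℝ :=
  {x | x ∈ indSet L P ∧ ∀ k : ℕ, 1 ≤ k → k < N → L.T^[k] x ∉ indSet L P}

theorem abs_sub_x₀_le_of_mem_noReturnBefore {c : ℝ} (hc : 0 < c)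
    (hcusp : ∀ x ∈ Icc 0 1, c * |x - L.x₀| ^ L.Bs ≤ 1 - L.T x) {n : ℕ} {x : ℝ}
    (hx : x ∈ P.noReturnBefore (n + 3)) (hmiss : ∀ k ∈ Icc 2 (n + 2), L.T^[k] x ≠ L.x₀) :
    |x - L.x₀| ≤ (P.a' 0 / (L.α * c)) ^ L.Bs⁻¹ * L.decayRate ^ n := by
  obtain ⟨hxI, hret⟩ := hx
  -- `Ioo (P.a' 0) (P.a 0)` is `I ∪ {x₀}`.
  have hesc : ∀ k ∈ Icc 2 (n + 2), L.T^[k] x ∉ Ioo (P.a' 0) (P.a 0) :=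
    fun k ⟨hk2, hkn⟩ hIoo => hret k (by omega) (by omega) ⟨hIoo, hmiss k ⟨hk2, hkn⟩⟩
  refine le_rpow_inv_mul_pow_of_rpow_mul_pow_le (abs_nonneg _) L.Bs_pos L.α'_pos
    ((le_div_iff₀ (mul_pos L.hα.1 hc)).2 ?_)
  calc |x - L.x₀| ^ L.Bs * L.α' ^ n * (L.α * c)
      = L.α * L.α' ^ n * (c * |x - L.x₀| ^ L.Bs) := by ring
    _ ≤ L.α * L.α' ^ n * (1 - L.T x) := by
      gcongr
      · exact mul_nonneg L.hα.1.le (pow_nonneg L.α'_pos.le n)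
      · exact hcusp x (P.indSet_subset_Icc hxI)
    _ ≤ P.a' 0 := P.α_mul_α'_pow_mul_one_sub_T_le hxI (hret 1 le_rfl (by omega)) n hesc

theorem exists_volume_noReturnBefore_le :
    ∃ K > 0, ∀ N ≥ 3,
      volume (P.noReturnBefore N) ≤ ENNReal.ofReal (K * L.decayRate ^ N) := by
  obtain ⟨c, hc, hcusp⟩ := L.exists_mul_rpow_le_one_sub_T
  have hD : 0 < P.a' 0 / (L.α * c) := div_pos P.ha'0.1.1 (mul_pos L.hα.1 hc)
  have hr := L.decayRate_pos
  refine ⟨2 * (P.a' 0 / (L.α * c)) ^ L.Bs⁻¹ / L.decayRate ^ 3, by positivity,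
    fun N hN => ?_⟩
  obtain ⟨n, rfl⟩ : ∃ n, N = n + 3 := ⟨N - 3, by omega⟩
  set R := (P.a' 0 / (L.α * c)) ^ L.Bs⁻¹ * L.decayRate ^ n with hR
  set E := ⋃ k ∈ Finset.range (n + 3), Icc 0 1 ∩ L.T^[k] ⁻¹' {L.x₀}
  have hsub : P.noReturnBefore (n + 3) ⊆ Icc (L.x₀ - R) (L.x₀ + R) ∪ E := by
    intro x hx
    by_cases hhit : ∃ k ∈ Icc 2 (n + 2), L.T^[k] x = L.x₀
    · obtain ⟨k, ⟨_, hkn⟩, hkx⟩ := hhit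
      exact Or.inr (mem_biUnion (Finset.mem_range.2 (by omega : k < n + 3))
        ⟨P.indSet_subset_Icc hx.1, hkx⟩)
    push Not at hhit
    have hdist := P.abs_sub_x₀_le_of_mem_noReturnBefore hc hcusp hx hhit
    exact Or.inl ⟨by linarith [(abs_le.1 hdist).1], by linarith [(abs_le.1 hdist).2]⟩
  have hnull : volume E = 0 :=
    (Finite.biUnion (Finset.range (n + 3)).finite_toSet fun k _ =>
      L.finite_inter_preimage_iterate (finite_singleton L.x₀) k).measure_zero volume
  calc volume (P.noReturnBefore (n + 3))
      ≤ volume (Icc (L.x₀ - R) (L.x₀ + R)) + volume E :=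
        (measure_mono hsub).trans (measure_union_le _ _)
    _ = _ := by
        rw [hnull, add_zero, Real.volume_Icc, hR]
        congr 1
        field_simp
        ring

end PreimageData

theorem return_time_tail_general (L : LorenzMap) (P : PreimageData L) :
    ∃ C > (0:ℝ), ∀ᶠ n : ℕ in atTop,
      (∑' j : ℕ, volume {x | x ∈ indSet L P ∧
          ∀ k : ℕ, 1 ≤ k → k < n + 1 + j → L.T^[k] x ∉ indSet L P})
        ≤ ENNReal.ofReal (C * L.α' ^ (-(n:ℝ) / L.Bs)) := by
  obtain ⟨K, hK, hvol⟩ := P.exists_volume_noReturnBefore_le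
  set r := L.decayRate
  refine ⟨K * r / (1 - r),
    div_pos (mul_pos hK L.decayRate_pos) (sub_pos.2 L.decayRate_lt_one), ?_⟩
  filter_upwards [eventually_ge_atTop 2] with n hn
  calc _ ≤ ∑' j : ℕ, ENNReal.ofReal (K * r ^ (n + 1 + j)) :=
        ENNReal.tsum_le_tsum fun j => hvol (n + 1 + j) (by omega)
    _ = ENNReal.ofReal (K * r / (1 - r) * r ^ n) :=
        ENNReal.tsum_ofReal_mul_pow_add hK.le L.decayRate_pos.le L.decayRate_lt_one n
    _ = _ := by rw [L.decayRate_pow]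

/-- Under conditions (i)–(iii) of the expansion lemma, the tail of the
Lebesgue measure of the return-time function on `I` decays exponentially:
`Σ_{k>n} m{x ∈ I : τ_I(x) ≥ k} = O((α')^{-n/B*})` as `n → ∞`. -/
theorem return_time_tail (L : LorenzMap) (P : PreimageData L) (α'' : ℝ)
    (hexp : ExpCond L P α'') :
    ∃ C > (0:ℝ), ∀ᶠ n : ℕ in atTop,
      (∑' j : ℕ, volume {x | x ∈ indSet L P ∧
          ∀ k : ℕ, 1 ≤ k → k < n + 1 + j → L.T^[k] x ∉ indSet L P})
        ≤ ENNReal.ofReal (C * L.α' ^ (-(n:ℝ) / L.Bs)) :=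
  return_time_tail_general L P
end
end

section
/- Let σ, ρ, β > 0 and let u : ℝ → ℝ³ solve the shifted Lorenz '63 system u̇₁ = −σu₁ + σu₂, u̇₂ = −u₁u₃ − σu₁ − u₂, u̇₃ = u₁u₂ − βu₃ − β(ρ+σ). Then the second derivative of the Casimir C(t) = ‖u(t)‖² satisfies, writing z := u₃ + (ρ+σ)/2, C̈(t) = 4{σ²u₁² + u₂² − [σ(σ−1) + (β−1)z + (ρ+σ)/2]·u₁u₂ + β²z² + β²·((ρ+σ)/2)·z} evaluated along the solution. -/
theorem hasDerivAt_weighted_energy {σ β c u₁' u₂' u₃' t : ℝ} {u₁ u₂ u₃ : ℝ → ℝ}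
    (hu₁ : HasDerivAt u₁ u₁' t) (hu₂ : HasDerivAt u₂ u₂' t) (hu₃ : HasDerivAt u₃ u₃' t) :
    HasDerivAt (fun s => σ * u₁ s ^ 2 + u₂ s ^ 2 + β * (u₃ s + c) ^ 2)
      (2 * (σ * u₁ t * u₁' + u₂ t * u₂' + β * (u₃ t + c) * u₃')) t := by
  have h := (((hu₁.pow 2).const_mul σ).add (hu₂.pow 2)).add (((hu₃.add_const c).pow 2).const_mul β)
  exact h.congr_deriv (by ring)

theorem casimir_second_derivative_general (σ ρ β : ℝ)
    (u₁ u₂ u₃ : ℝ → ℝ)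
    (hu₁ : ∀ t, HasDerivAt u₁ (-σ * u₁ t + σ * u₂ t) t)
    (hu₂ : ∀ t, HasDerivAt u₂ (-(u₁ t) * u₃ t - σ * u₁ t - u₂ t) t)
    (hu₃ : ∀ t, HasDerivAt u₃ (u₁ t * u₂ t - β * u₃ t - β * (ρ + σ)) t) :
    ∀ t, HasDerivAt
      (fun s => -2 * ((σ * u₁ s ^ 2 + u₂ s ^ 2 + β * (u₃ s + (ρ + σ) / 2) ^ 2)
        - β * (ρ + σ) ^ 2 / 4))
      (4 * (σ ^ 2 * u₁ t ^ 2 + u₂ t ^ 2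
        - (σ * (σ - 1) + (β - 1) * (u₃ t + (ρ + σ) / 2) + (ρ + σ) / 2)
            * (u₁ t * u₂ t)
        + β ^ 2 * (u₃ t + (ρ + σ) / 2) ^ 2
        + β ^ 2 * ((ρ + σ) / 2) * (u₃ t + (ρ + σ) / 2))) t := by
  intro t
  have hE := hasDerivAt_weighted_energy (σ := σ) (β := β) (c := (ρ + σ) / 2)
    (hu₁ t) (hu₂ t) (hu₃ t)
  exact ((hE.sub_const _).const_mul (-2)).congr_deriv (by ring)

/-- For a solution `u` of the shifted Lorenz '63 system, the second
derivative of the Casimir `C(t) = ‖u(t)‖²` — i.e. the derivative of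
`Ċ = −2[E(u) − β(ρ+σ)²/4]` along the solution — equals, writing `z = u₃ + (ρ+σ)/2`,
`C̈ = 4{σ²u₁² + u₂² − [σ(σ−1) + (β−1)z + (ρ+σ)/2] u₁u₂ + β²z² + β²((ρ+σ)/2)z}`. -/
theorem casimir_second_derivative (σ ρ β : ℝ) (hσ : 0 < σ) (hρ : 0 < ρ) (hβ : 0 < β)
    (u₁ u₂ u₃ : ℝ → ℝ)
    (hu₁ : ∀ t, HasDerivAt u₁ (-σ * u₁ t + σ * u₂ t) t)
    (hu₂ : ∀ t, HasDerivAt u₂ (-(u₁ t) * u₃ t - σ * u₁ t - u₂ t) t)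
    (hu₃ : ∀ t, HasDerivAt u₃ (u₁ t * u₂ t - β * u₃ t - β * (ρ + σ)) t) :
    ∀ t, HasDerivAt
      (fun s => -2 * ((σ * u₁ s ^ 2 + u₂ s ^ 2 + β * (u₃ s + (ρ + σ) / 2) ^ 2)
        - β * (ρ + σ) ^ 2 / 4))
      (4 * (σ ^ 2 * u₁ t ^ 2 + u₂ t ^ 2
        - (σ * (σ - 1) + (β - 1) * (u₃ t + (ρ + σ) / 2) + (ρ + σ) / 2)
            * (u₁ t * u₂ t)
        + β ^ 2 * (u₃ t + (ρ + σ) / 2) ^ 2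
        + β ^ 2 * ((ρ + σ) / 2) * (u₃ t + (ρ + σ) / 2))) t :=
  casimir_second_derivative_general σ ρ β u₁ u₂ u₃ hu₁ hu₂ hu₃
end
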